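/- (Boundary-condition positivity theorem.) For faces f = 1, …, n_f and surface points l = 1, …, n_{q,f}, suppose given: interior quadrature states y_q ∈ 𝒢 (q = 1, …, n_q); interior trace states y_{f,l} ∈ 𝒢 and prescribed boundary states w_{f,l} ∈ 𝒢, each with all concentration components strictly positive; mass-conserving normal viscous boundary fluxes F_{f,l} contracted with the outward unit normal; surface weights ν_{f,l} ≥ 0; coefficients θ_q ≥ 0 and θ_{f,l} > 0 with Σ_q θ_q + Σ_{f,l} θ_{f,l} = 1; dissipation coefficients β_{f,l} > max{β*(y_{f,l}, F_{f,l}), β*(w_{f,l}, F_{f,l})}; and a ratio τ = Δt*/|κ| > 0 satisfying τ·β_{f,l}·ν_{f,l} ≤ θ_{f,l} for all f, l. Then the updated element average ȳ_v := Σ_q θ_q y_q + Σ_{f,l} θ_{f,l} y_{f,l} + τ·Σ_{f,l} ν_{f,l}·[ F_{f,l} − (β_{f,l}/2)(y_{f,l} − w_{f,l}) ] belongs to 𝒢. -/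

import Mathlib

/-!
The admissible set `𝒢` is convex: the constraints on `C` and `ρ` are linear, and
`Z/ρ = E - |m|²/(2ρ) - ρ u0` is concave on `{ρ > 0}`. A mass-conserving flux `G` does not change
`ρ`, and for `β > β*(y, G)` the state `y + G/β` is again admissible: the bound on `|G_C|/C` keeps
the concentrations nonnegative, and `Z(y + tG) = Z(y) + t b - t² |G_m|²/2` is positive at
`t = 1/β`. Each boundary node then splits as
`θ y + τν (F - (β/2)(y - w)) = (θ - τβν) y + (τβν/2)(y + F/β) + (τβν/2)(w + F/β)`,
which writes the updated average as a convex combination of admissible states.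
-/

open scoped BigOperators

namespace PaperStmt

noncomputable section

abbrev State (d ns : ℕ) : Type := (Fin d → ℝ) × ℝ × (Fin ns → ℝ)

variable {d ns : ℕ}

/-- Euclidean dot product of momentum-like vectors. -/
def dotP (a b : Fin d → ℝ) : ℝ := ∑ k, a k * b k

/-- Squared Euclidean norm. -/
def normSq (a : Fin d → ℝ) : ℝ := ∑ k, a k ^ 2

/-- Density `ρ(y) = Σ_i W_i C_i`. -/
def rho (W : Fin ns → ℝ) (y : State d ns) : ℝ := ∑ i, W i * y.2.2 i

/-- Scaled shifted internal energy `Z(y) = ρ(y)·E − |m|²/2 − ρ(y)²·u0`. -/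
def Z (W : Fin ns → ℝ) (u0 : ℝ) (y : State d ns) : ℝ :=
  rho W y * y.2.1 - normSq y.1 / 2 - rho W y ^ 2 * u0

/-- The admissible set `𝒢`. -/
def Gset (W : Fin ns → ℝ) (u0 : ℝ) : Set (State d ns) :=
  {y | (∀ i, 0 ≤ y.2.2 i) ∧ 0 < rho W y ∧ 0 < Z W u0 y}

/-- Mass production of a normal viscous flux: `M(G) = Σ_i W_i G_{C,i}`. -/
def Mflux (W : Fin ns → ℝ) (G : State d ns) : ℝ := ∑ i, W i * G.2.2 i

/-- `b(y,G) = ρ(y)·G_E − m·G_m`. -/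
def bCoef (W : Fin ns → ℝ) (y G : State d ns) : ℝ :=
  rho W y * G.2.1 - dotP y.1 G.1

/-- `β_T(y,G) = (|b| + √(b² + 2 Z(y) |G_m|²)) / (2 Z(y))`. -/
def betaT (W : Fin ns → ℝ) (u0 : ℝ) (y G : State d ns) : ℝ :=
  (|bCoef W y G| + Real.sqrt (bCoef W y G ^ 2 + 2 * Z W u0 y * normSq G.1)) /
    (2 * Z W u0 y)

/-- `β*(y,G) = max{ max_i |G_{C,i}|/C_i , β_T(y,G) }`. -/
def betaStar (W : Fin ns → ℝ) (u0 : ℝ) (y G : State d ns) : ℝ :=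
  max (⨆ i, |G.2.2 i| / y.2.2 i) (betaT W u0 y G)

theorem rho_isLinearMap (W : Fin ns → ℝ) : IsLinearMap ℝ (rho (d := d) W) where
  map_add x y := by simp only [rho, Prod.snd_add, Pi.add_apply, mul_add, Finset.sum_add_distrib]
  map_smul c x := by
    simp only [rho, Prod.smul_snd, Pi.smul_apply, smul_eq_mul, Finset.mul_sum, mul_left_comm]

theorem normSq_nonneg (a : Fin d → ℝ) : 0 ≤ normSq a :=
  Finset.sum_nonneg fun _ _ => sq_nonneg _

theorem normSq_add_smul (a b : Fin d → ℝ) (t : ℝ) :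
    normSq (a + t • b) = normSq a + 2 * t * dotP a b + t ^ 2 * normSq b := by
  simp only [normSq, dotP, Finset.mul_sum, ← Finset.sum_add_distrib, Pi.add_apply,
    Pi.smul_apply, smul_eq_mul]
  exact Finset.sum_congr rfl fun _ _ => by ring

theorem sq_mul_add_mul_le {a b x₁ x₂ ρ₁ ρ₂ : ℝ} (ha : 0 ≤ a) (hb : 0 ≤ b)
    (hρ₁ : 0 < ρ₁) (hρ₂ : 0 < ρ₂) :
    (a * x₁ + b * x₂) ^ 2 ≤ (a * ρ₁ + b * ρ₂) * (a * x₁ ^ 2 / ρ₁ + b * x₂ ^ 2 / ρ₂) := by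
  have key : (a * ρ₁ + b * ρ₂) * (a * x₁ ^ 2 / ρ₁ + b * x₂ ^ 2 / ρ₂) - (a * x₁ + b * x₂) ^ 2
      = a * b * (ρ₂ * x₁ - ρ₁ * x₂) ^ 2 / (ρ₁ * ρ₂) := by
    field_simp
    ring
  have : 0 ≤ a * b * (ρ₂ * x₁ - ρ₁ * x₂) ^ 2 / (ρ₁ * ρ₂) := by positivity
  linarith

theorem normSq_smul_add_smul_le {a b ρ₁ ρ₂ : ℝ} (m₁ m₂ : Fin d → ℝ) (ha : 0 ≤ a) (hb : 0 ≤ b)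
    (hρ₁ : 0 < ρ₁) (hρ₂ : 0 < ρ₂) :
    normSq (a • m₁ + b • m₂)
      ≤ (a * ρ₁ + b * ρ₂) * (a * normSq m₁ / ρ₁ + b * normSq m₂ / ρ₂) := by
  calc normSq (a • m₁ + b • m₂) = ∑ k, (a * m₁ k + b * m₂ k) ^ 2 := rfl
    _ ≤ ∑ k, (a * ρ₁ + b * ρ₂) * (a * m₁ k ^ 2 / ρ₁ + b * m₂ k ^ 2 / ρ₂) :=
      Finset.sum_le_sum fun _ _ => sq_mul_add_mul_le ha hb hρ₁ hρ₂
    _ = _ := by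
      simp only [normSq, ← Finset.mul_sum, Finset.sum_add_distrib, ← Finset.sum_div]

theorem Z_div_rho (W : Fin ns → ℝ) (u0 : ℝ) {y : State d ns} (hρ : rho W y ≠ 0) :
    Z W u0 y / rho W y = y.2.1 - normSq y.1 / (2 * rho W y) - rho W y * u0 := by
  rw [Z]
  field_simp

-- `|m|²/ρ` is the perspective of the convex function `|m|²`, hence jointly convex in `(m, ρ)`.
theorem concaveOn_Z_div_rho (W : Fin ns → ℝ) (u0 : ℝ) :
    ConcaveOn ℝ {y : State d ns | 0 < rho W y} fun y => Z W u0 y / rho W y := by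
  have hconv : Convex ℝ {y : State d ns | 0 < rho W y} :=
    convex_halfSpace_gt (rho_isLinearMap W) 0
  refine ⟨hconv, ?_⟩
  intro x (hx : 0 < rho W x) y (hy : 0 < rho W y) a b ha hb hab
  have hρ : rho W (a • x + b • y) = a * rho W x + b * rho W y := by
    rw [(rho_isLinearMap W).map_add, (rho_isLinearMap W).map_smul,
      (rho_isLinearMap W).map_smul, smul_eq_mul, smul_eq_mul]
  have hxy : 0 < rho W (a • x + b • y) := hconv hx hy ha hb hab
  have hCS : normSq (a • x.1 + b • y.1) / (2 * (a * rho W x + b * rho W y))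
      ≤ (a * normSq x.1 / rho W x + b * normSq y.1 / rho W y) / 2 := by
    rw [div_le_iff₀ (mul_pos two_pos (hρ ▸ hxy))]
    nlinarith [normSq_smul_add_smul_le x.1 y.1 ha hb hx hy]
  have hE : (a • x + b • y).2.1 = a * x.2.1 + b * y.2.1 := rfl
  have hmom : (a • x + b • y).1 = a • x.1 + b • y.1 := rfl
  simp only [smul_eq_mul]
  rw [Z_div_rho W u0 hx.ne', Z_div_rho W u0 hy.ne', Z_div_rho W u0 hxy.ne', hE, hmom, hρ]
  have e1 : a * (normSq x.1 / (2 * rho W x)) = a * normSq x.1 / rho W x / 2 := by ring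
  have e2 : b * (normSq y.1 / (2 * rho W y)) = b * normSq y.1 / rho W y / 2 := by ring
  linarith

theorem convex_Gset (W : Fin ns → ℝ) (u0 : ℝ) : Convex ℝ (Gset (d := d) W u0) := by
  have hG : Gset (d := d) W u0 = (⋂ i, {y | 0 ≤ y.2.2 i})
      ∩ {y ∈ {y | 0 < rho W y} | 0 < Z W u0 y / rho W y} := by
    ext y
    simp only [Gset, Set.mem_inter_iff, Set.mem_iInter, Set.mem_ofPred_eq]
    constructor
    · rintro ⟨hC, hρ, hZ⟩
      exact ⟨hC, hρ, div_pos hZ hρ⟩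
    · rintro ⟨hC, hρ, hZ⟩
      exact ⟨hC, hρ, (div_pos_iff_of_pos_right hρ).mp hZ⟩
  rw [hG]
  exact (convex_iInter fun i => convex_halfSpace_ge ⟨fun _ _ => rfl, fun _ _ => rfl⟩ 0).inter
    ((concaveOn_Z_div_rho W u0).convex_gt 0)

theorem rho_add_smul_of_Mflux_eq_zero {W : Fin ns → ℝ} {G : State d ns} (hM : Mflux W G = 0)
    (y : State d ns) (t : ℝ) : rho W (y + t • G) = rho W y := by
  have hG : rho W G = 0 := hM
  rw [(rho_isLinearMap W).map_add, (rho_isLinearMap W).map_smul, hG, smul_zero, add_zero]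

theorem Z_add_smul_of_Mflux_eq_zero {W : Fin ns → ℝ} (u0 : ℝ) {G : State d ns}
    (hM : Mflux W G = 0) (y : State d ns) (t : ℝ) :
    Z W u0 (y + t • G) = Z W u0 y + t * bCoef W y G - t ^ 2 * normSq G.1 / 2 := by
  have hm : (y + t • G).1 = y.1 + t • G.1 := rfl
  have hE : (y + t • G).2.1 = y.2.1 + t * G.2.1 := rfl
  rw [Z, Z, bCoef, rho_add_smul_of_Mflux_eq_zero hM, hm, hE, normSq_add_smul]
  ring

theorem betaT_nonneg {W : Fin ns → ℝ} {u0 : ℝ} {y : State d ns} (G : State d ns)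
    (hZ : 0 < Z W u0 y) : 0 ≤ betaT W u0 y G := by
  unfold betaT
  positivity

-- `(|b| + √(b² + 2zn)) / (2z)` bounds the positive root of `z β² + b β - n/2`.
theorem quadratic_pos_of_betaT_lt {z b n β : ℝ} (hz : 0 < z) (hn : 0 ≤ n)
    (hβ : (|b| + √(b ^ 2 + 2 * z * n)) / (2 * z) < β) : 0 < z * β ^ 2 + b * β - n / 2 := by
  set s := √(b ^ 2 + 2 * z * n)
  have hs : 0 ≤ s := Real.sqrt_nonneg _
  have hs2 : s ^ 2 = b ^ 2 + 2 * z * n := Real.sq_sqrt (by positivity)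
  have hlt : |b| + s < 2 * z * β := by rwa [div_lt_iff₀ (by positivity), mul_comm] at hβ
  have hs_lt : s < 2 * z * β + b := by linarith [neg_abs_le b]
  nlinarith

theorem add_inv_smul_mem_Gset {W : Fin ns → ℝ} {u0 : ℝ} {y G : State d ns} {β : ℝ}
    (hy : y ∈ Gset W u0) (hyC : ∀ i, 0 < y.2.2 i) (hM : Mflux W G = 0)
    (hβ : betaStar W u0 y G < β) : y + β⁻¹ • G ∈ Gset W u0 := by
  obtain ⟨-, hρ, hZ⟩ := hy
  have hβT : betaT W u0 y G < β := (le_max_right _ _).trans_lt hβ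
  have hβ0 : 0 < β := (betaT_nonneg G hZ).trans_lt hβT
  refine ⟨fun i => ?_, by rwa [rho_add_smul_of_Mflux_eq_zero hM], ?_⟩
  · have hi : |G.2.2 i| / y.2.2 i < β :=
      ((Finite.le_ciSup (fun j => |G.2.2 j| / y.2.2 j) i).trans (le_max_left _ _)).trans_lt hβ
    rw [div_lt_iff₀ (hyC i)] at hi
    have hG : -(β * y.2.2 i) < G.2.2 i := (abs_lt.mp hi).1
    show 0 ≤ y.2.2 i + β⁻¹ * G.2.2 i
    have hC : -y.2.2 i < β⁻¹ * G.2.2 i := by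
      rw [lt_inv_mul_iff₀ hβ0]
      linarith
    linarith
  · have hq := quadratic_pos_of_betaT_lt hZ (normSq_nonneg G.1) hβT
    rw [Z_add_smul_of_Mflux_eq_zero u0 hM]
    have : Z W u0 y + β⁻¹ * bCoef W y G - β⁻¹ ^ 2 * normSq G.1 / 2
        = (Z W u0 y * β ^ 2 + bCoef W y G * β - normSq G.1 / 2) / β ^ 2 := by
      field_simp
    rw [this]
    exact div_pos hq (by positivity)

theorem _root_.Convex.sum_add_sum_mem {R E ι κ : Type*} [Field R] [LinearOrder R]
    [IsStrictOrderedRing R] [AddCommGroup E] [Module R E] [Fintype ι] [Fintype κ] {s : Set E}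
    (hs : Convex R s)
    {a : ι → R} {b : κ → R} {x : ι → E} {z : κ → E} (ha : ∀ i, 0 ≤ a i) (hb : ∀ k, 0 ≤ b k)
    (hab : ∑ i, a i + ∑ k, b k = 1) (hx : ∀ i, x i ∈ s) (hz : ∀ k, z k ∈ s) :
    ∑ i, a i • x i + ∑ k, b k • z k ∈ s := by
  have h := hs.sum_mem (t := Finset.univ) (w := Sum.elim a b) (z := Sum.elim x z)
    (fun i _ => i.rec ha hb) (by rwa [Fintype.sum_sum_type]) (fun i _ => i.rec hx hz)
  rwa [Fintype.sum_sum_type] at h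

def boundaryWeight (θ c : ℝ) : Fin 3 → ℝ := ![θ - c, c / 2, c / 2]

def boundaryState (y w F : State d ns) (β : ℝ) : Fin 3 → State d ns :=
  ![y, y + β⁻¹ • F, w + β⁻¹ • F]

theorem sum_boundaryWeight (θ c : ℝ) : ∑ k, boundaryWeight θ c k = θ := by
  simp only [boundaryWeight, Fin.sum_univ_three, Matrix.cons_val]
  ring

theorem boundaryWeight_nonneg {θ c : ℝ} (hc : 0 ≤ c) (hcθ : c ≤ θ) (k : Fin 3) :
    0 ≤ boundaryWeight θ c k := by
  fin_cases k <;> simp [boundaryWeight] <;> linarith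

theorem sum_boundaryWeight_smul_boundaryState (y w F : State d ns) (θ τ ν : ℝ) {β : ℝ}
    (hβ : β ≠ 0) :
    ∑ k, boundaryWeight θ (τ * β * ν) k • boundaryState y w F β k
      = θ • y + τ • (ν • (F - (β / 2) • (y - w))) := by
  simp only [boundaryWeight, boundaryState, Fin.sum_univ_three, Matrix.cons_val]
  have h : τ * β * ν / 2 * β⁻¹ = τ * ν / 2 := by field_simp
  rw [smul_add, smul_add, smul_smul, smul_smul, h]
  module

theorem boundaryState_mem_Gset {W : Fin ns → ℝ} {u0 : ℝ} {y w F : State d ns} {β : ℝ}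
    (hy : y ∈ Gset W u0) (hw : w ∈ Gset W u0) (hyC : ∀ i, 0 < y.2.2 i) (hwC : ∀ i, 0 < w.2.2 i)
    (hM : Mflux W F = 0) (hβ : max (betaStar W u0 y F) (betaStar W u0 w F) < β) (k : Fin 3) :
    boundaryState y w F β k ∈ Gset W u0 := by
  fin_cases k
  · exact hy
  · exact add_inv_smul_mem_Gset hy hyC hM ((le_max_left _ _).trans_lt hβ)
  · exact add_inv_smul_mem_Gset hw hwC hM ((le_max_right _ _).trans_lt hβ)

theorem boundary_positivity_general (W : Fin ns → ℝ) (u0 : ℝ)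
    {nq nf : ℕ} (nql : Fin nf → ℕ)
    (yq : Fin nq → State d ns) (hyq : ∀ q, yq q ∈ Gset W u0)
    (ytr w : ∀ f : Fin nf, Fin (nql f) → State d ns)
    (hytr : ∀ f l, ytr f l ∈ Gset W u0) (hw : ∀ f l, w f l ∈ Gset W u0)
    (hytrC : ∀ f l i, 0 < (ytr f l).2.2 i) (hwC : ∀ f l i, 0 < (w f l).2.2 i)
    (F : ∀ f : Fin nf, Fin (nql f) → State d ns)
    (hF : ∀ f l, Mflux W (F f l) = 0)
    (ν : ∀ f : Fin nf, Fin (nql f) → ℝ) (hν : ∀ f l, 0 ≤ ν f l)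
    (θq : Fin nq → ℝ) (hθq : ∀ q, 0 ≤ θq q)
    (θfl : ∀ f : Fin nf, Fin (nql f) → ℝ)
    (hθsum : (∑ q, θq q) + (∑ f, ∑ l, θfl f l) = 1)
    (β : ∀ f : Fin nf, Fin (nql f) → ℝ)
    (hβ : ∀ f l,
      max (betaStar W u0 (ytr f l) (F f l)) (betaStar W u0 (w f l) (F f l)) < β f l)
    (τ : ℝ) (hτ : 0 < τ) (hτle : ∀ f l, τ * β f l * ν f l ≤ θfl f l) :
    (∑ q, θq q • yq q) + (∑ f, ∑ l, θfl f l • ytr f l)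
      + τ • (∑ f, ∑ l, ν f l • (F f l - (β f l / 2) • (ytr f l - w f l)))
      ∈ Gset W u0 := by
  have hβ_pos : ∀ f l, 0 < β f l := fun f l => (betaT_nonneg (F f l) (hytr f l).2.2).trans_lt <|
    (le_max_right _ _).trans_lt <| (le_max_left _ _).trans_lt (hβ f l)
  have hsplit : ∀ f l, θfl f l • ytr f l + τ • (ν f l • (F f l - (β f l / 2) • (ytr f l - w f l)))
      = ∑ k, boundaryWeight (θfl f l) (τ * β f l * ν f l) k
          • boundaryState (ytr f l) (w f l) (F f l) (β f l) k :=
    fun f l => (sum_boundaryWeight_smul_boundaryState _ _ _ _ _ _ (hβ_pos f l).ne').symm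
  have hsum : (∑ q, θq q • yq q) + (∑ f, ∑ l, θfl f l • ytr f l)
      + τ • (∑ f, ∑ l, ν f l • (F f l - (β f l / 2) • (ytr f l - w f l)))
      = ∑ q, θq q • yq q + ∑ p : Σ f, Fin (nql f) × Fin 3,
          boundaryWeight (θfl p.1 p.2.1) (τ * β p.1 p.2.1 * ν p.1 p.2.1) p.2.2
            • boundaryState (ytr p.1 p.2.1) (w p.1 p.2.1) (F p.1 p.2.1) (β p.1 p.2.1) p.2.2 := by
    simp only [Fintype.sum_sigma, Fintype.sum_prod_type, ← hsplit, Finset.smul_sum, add_assoc,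
      Finset.sum_add_distrib]
  rw [hsum]
  refine (convex_Gset W u0).sum_add_sum_mem hθq
    (fun p => boundaryWeight_nonneg ?_ (hτle _ _) _) ?_ hyq
    (fun p => boundaryState_mem_Gset (hytr _ _) (hw _ _) (hytrC _ _) (hwC _ _) (hF _ _) (hβ _ _) _)
  · exact mul_nonneg (mul_nonneg hτ.le (hβ_pos _ _).le) (hν _ _)
  · simpa only [Fintype.sum_sigma, Fintype.sum_prod_type, sum_boundaryWeight] using hθsum

/-- boundary-condition positivity theorem: with prescribed boundary states
`w_{f,l} ∈ 𝒢`, boundary viscous fluxes `F_{f,l}` appearing with full weight, and the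
boundary penalty `δ^v_∂ = (β/2)(y⁺ − y_∂)`, the updated element average of the viscous
contribution lies in `𝒢` under the stated constraints. -/
theorem boundary_positivity (W : Fin ns → ℝ) (u0 : ℝ) (hW : ∀ i, 0 < W i)
    {nq nf : ℕ} (nql : Fin nf → ℕ)
    (yq : Fin nq → State d ns) (hyq : ∀ q, yq q ∈ Gset W u0)
    (ytr w : ∀ f : Fin nf, Fin (nql f) → State d ns)
    (hytr : ∀ f l, ytr f l ∈ Gset W u0) (hw : ∀ f l, w f l ∈ Gset W u0)
    (hytrC : ∀ f l i, 0 < (ytr f l).2.2 i) (hwC : ∀ f l i, 0 < (w f l).2.2 i)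
    (F : ∀ f : Fin nf, Fin (nql f) → State d ns)
    (hF : ∀ f l, Mflux W (F f l) = 0)
    (ν : ∀ f : Fin nf, Fin (nql f) → ℝ) (hν : ∀ f l, 0 ≤ ν f l)
    (θq : Fin nq → ℝ) (hθq : ∀ q, 0 ≤ θq q)
    (θfl : ∀ f : Fin nf, Fin (nql f) → ℝ) (hθfl : ∀ f l, 0 < θfl f l)
    (hθsum : (∑ q, θq q) + (∑ f, ∑ l, θfl f l) = 1)
    (β : ∀ f : Fin nf, Fin (nql f) → ℝ)
    (hβ : ∀ f l,
      max (betaStar W u0 (ytr f l) (F f l)) (betaStar W u0 (w f l) (F f l)) < β f l)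
    (τ : ℝ) (hτ : 0 < τ) (hτle : ∀ f l, τ * β f l * ν f l ≤ θfl f l) :
    (∑ q, θq q • yq q) + (∑ f, ∑ l, θfl f l • ytr f l)
      + τ • (∑ f, ∑ l, ν f l • (F f l - (β f l / 2) • (ytr f l - w f l)))
      ∈ Gset W u0 :=
  boundary_positivity_general W u0 nql yq hyq ytr w hytr hw hytrC hwC F hF ν hν θq hθq θfl hθsum β
    hβ τ hτ hτle

end
end PaperStmt
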